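/- arXiv:2308.00263 — 2 statements merged into one kernel-verified Lean document; each statement's English description precedes it below -/
import Mathlib

section
/- Let (Ω, μ) be a probability space, d ≥ 1, δ ∈ (0, 1], and η_g a real number. Let (x^t)_{t≥0}, (x̂^t)_{t≥0}, (Δ^t)_{t≥0} be sequences of square-integrable random vectors in ℝ^d such that (i) x̂^0 = x^0 almost surely, (ii) x^{t+1} = x^t + η_g Δ^t almost surely for every t, (iii) E[‖x̂^{t+1} − x^{t+1}‖²] ≤ (1 − δ) E[‖x^{t+1} − x̂^t‖²] for every t, and (iv) E[⟨x^t − x̂^t, Δ^t⟩] = 0 for every t. Then for every t ≥ 0: E[‖x^t − x̂^t‖²] ≤ η_g² ∑_{s=0}^{t−1} (1 − δ)^{t−s} E[‖Δ^s‖²]. -/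
/-!
Write `e t = E‖x^t − x̂^t‖²`. Since `x^{t+1} − x̂^t = (x^t − x̂^t) + η_g Δ^t`, unbiasedness kills the
cross term and `E‖x^{t+1} − x̂^t‖² = e t + η_g² E‖Δ^t‖²`; the compression property then gives
`e (t+1) ≤ (1 − δ) (e t + η_g² E‖Δ^t‖²)`, and unrolling this recursion from `e 0 = 0` yields the bound.
-/

open MeasureTheory Finset
open scoped RealInnerProductSpace

theorem le_sum_pow_mul_of_le_mul_add {q : ℝ} (hq : 0 ≤ q) {a b : ℕ → ℝ} (h0 : a 0 ≤ 0)
    (hstep : ∀ t, a (t + 1) ≤ q * (a t + b t)) (t : ℕ) :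
    a t ≤ ∑ s ∈ range t, q ^ (t - s) * b s := by
  induction t with
  | zero => simpa using h0
  | succ t ih =>
    have hpow : ∀ s ∈ range t, q ^ (t + 1 - s) * b s = q * (q ^ (t - s) * b s) := by
      intro s hs
      rw [Nat.sub_add_comm (mem_range.mp hs).le, pow_succ]
      ring
    calc a (t + 1) ≤ q * (a t + b t) := hstep t
      _ ≤ q * (∑ s ∈ range t, q ^ (t - s) * b s + b t) := by gcongr
      _ = ∑ s ∈ range (t + 1), q ^ (t + 1 - s) * b s := by
        rw [sum_range_succ, sum_congr rfl hpow, ← mul_sum, Nat.add_sub_cancel_left, pow_one,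
          mul_add]

namespace MeasureTheory

variable {α E : Type*} [MeasurableSpace α] {μ : Measure α} [NormedAddCommGroup E] {f g : α → E}

theorem MemLp.integrable_norm_sq (hf : MemLp f 2 μ) : Integrable (fun a ↦ ‖f a‖ ^ 2) μ :=
  (memLp_two_iff_integrable_sq_norm hf.1).mp hf

variable [InnerProductSpace ℝ E]

theorem MemLp.integrable_inner (hf : MemLp f 2 μ) (hg : MemLp g 2 μ) :
    Integrable (fun a ↦ ⟪f a, g a⟫) μ :=
  memLp_one_iff_integrable.mp <| hf.of_bilin (inner ℝ) 1 hg (hf.1.inner hg.1)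
    (.of_forall fun _ ↦ by simpa using nnnorm_inner_le_nnnorm _ _)

theorem integral_norm_add_smul_sq (hf : MemLp f 2 μ) (hg : MemLp g 2 μ) (c : ℝ) :
    ∫ a, ‖f a + c • g a‖ ^ 2 ∂μ =
      ∫ a, ‖f a‖ ^ 2 ∂μ + 2 * c * ∫ a, ⟪f a, g a⟫ ∂μ + c ^ 2 * ∫ a, ‖g a‖ ^ 2 ∂μ := by
  have hexpand : ∀ a, ‖f a + c • g a‖ ^ 2 =
      ‖f a‖ ^ 2 + 2 * c * ⟪f a, g a⟫ + c ^ 2 * ‖g a‖ ^ 2 := fun a ↦ by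
    rw [norm_add_sq_real, real_inner_smul_right, norm_smul, mul_pow, Real.norm_eq_abs, sq_abs]
    ring
  have hf2 := hf.integrable_norm_sq
  have hfg := (hf.integrable_inner hg).const_mul (2 * c)
  simp_rw [hexpand]
  rw [integral_add (f := fun a ↦ ‖f a‖ ^ 2 + 2 * c * ⟪f a, g a⟫) (hf2.add hfg)
      (hg.integrable_norm_sq.const_mul _),
    integral_add hf2 hfg, integral_const_mul, integral_const_mul]

end MeasureTheory

theorem hidden_state_bound_unbiased_general
    {Ω : Type*} [MeasurableSpace Ω] (μ : Measure Ω)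
    (d : ℕ) (δ : ℝ) (hδ : δ ∈ Set.Ioc (0 : ℝ) 1) (ηg : ℝ)
    (x xh Δ : ℕ → Ω → EuclideanSpace ℝ (Fin d))
    (hxL2 : ∀ t, MemLp (x t) 2 μ)
    (hxhL2 : ∀ t, MemLp (xh t) 2 μ)
    (hΔL2 : ∀ t, MemLp (Δ t) 2 μ)
    (h0 : ∀ᵐ ω ∂μ, xh 0 ω = x 0 ω)
    (hstep : ∀ t, ∀ᵐ ω ∂μ, x (t + 1) ω = x t ω + ηg • Δ t ω)
    (hcomp : ∀ t, ∫ ω, ‖xh (t + 1) ω - x (t + 1) ω‖ ^ 2 ∂μ ≤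
      (1 - δ) * ∫ ω, ‖x (t + 1) ω - xh t ω‖ ^ 2 ∂μ)
    (horth : ∀ t, ∫ ω, ⟪x t ω - xh t ω, Δ t ω⟫ ∂μ = 0) :
    ∀ t, ∫ ω, ‖x t ω - xh t ω‖ ^ 2 ∂μ ≤
      ηg ^ 2 * ∑ s ∈ Finset.range t, (1 - δ) ^ (t - s) * ∫ ω, ‖Δ s ω‖ ^ 2 ∂μ := by
  have hinit : ∫ ω, ‖x 0 ω - xh 0 ω‖ ^ 2 ∂μ = 0 :=
    integral_eq_zero_of_ae (by filter_upwards [h0] with ω hω; simp [hω])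
  have hrec : ∀ t, ∫ ω, ‖x (t + 1) ω - xh (t + 1) ω‖ ^ 2 ∂μ ≤
      (1 - δ) * (∫ ω, ‖x t ω - xh t ω‖ ^ 2 ∂μ + ηg ^ 2 * ∫ ω, ‖Δ t ω‖ ^ 2 ∂μ) := fun t ↦
    calc ∫ ω, ‖x (t + 1) ω - xh (t + 1) ω‖ ^ 2 ∂μ
        = ∫ ω, ‖xh (t + 1) ω - x (t + 1) ω‖ ^ 2 ∂μ := by simp_rw [norm_sub_rev]
      _ ≤ (1 - δ) * ∫ ω, ‖x (t + 1) ω - xh t ω‖ ^ 2 ∂μ := hcomp t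
      _ = (1 - δ) * ∫ ω, ‖(x t ω - xh t ω) + ηg • Δ t ω‖ ^ 2 ∂μ := by
        congr 1
        refine integral_congr_ae ?_
        filter_upwards [hstep t] with ω hω
        rw [hω, add_sub_right_comm]
      _ = (1 - δ) * (∫ ω, ‖x t ω - xh t ω‖ ^ 2 ∂μ + ηg ^ 2 * ∫ ω, ‖Δ t ω‖ ^ 2 ∂μ) := by
        rw [integral_norm_add_smul_sq (f := fun ω ↦ x t ω - xh t ω) ((hxL2 t).sub (hxhL2 t))
          (hΔL2 t), horth, mul_zero, add_zero]
  intro t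
  simpa only [mul_sum, mul_left_comm] using
    le_sum_pow_mul_of_le_mul_add (a := fun t ↦ ∫ ω, ‖x t ω - xh t ω‖ ^ 2 ∂μ)
      (b := fun t ↦ ηg ^ 2 * ∫ ω, ‖Δ t ω‖ ^ 2 ∂μ) (sub_nonneg.mpr hδ.2) hinit.le hrec t

/-- Lemma A.4 of the paper: hidden state bound with an unbiased quantizer. -/
theorem hidden_state_bound_unbiased
    {Ω : Type*} [MeasurableSpace Ω] (μ : Measure Ω) [IsProbabilityMeasure μ]
    (d : ℕ) (hd : 1 ≤ d) (δ : ℝ) (hδ : δ ∈ Set.Ioc (0 : ℝ) 1) (ηg : ℝ)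
    (x xh Δ : ℕ → Ω → EuclideanSpace ℝ (Fin d))
    (hxL2 : ∀ t, MemLp (x t) 2 μ)
    (hxhL2 : ∀ t, MemLp (xh t) 2 μ)
    (hΔL2 : ∀ t, MemLp (Δ t) 2 μ)
    (h0 : ∀ᵐ ω ∂μ, xh 0 ω = x 0 ω)
    (hstep : ∀ t, ∀ᵐ ω ∂μ, x (t + 1) ω = x t ω + ηg • Δ t ω)
    (hcomp : ∀ t, ∫ ω, ‖xh (t + 1) ω - x (t + 1) ω‖ ^ 2 ∂μ ≤
      (1 - δ) * ∫ ω, ‖x (t + 1) ω - xh t ω‖ ^ 2 ∂μ)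
    (horth : ∀ t, ∫ ω, ⟪x t ω - xh t ω, Δ t ω⟫ ∂μ = 0) :
    ∀ t, ∫ ω, ‖x t ω - xh t ω‖ ^ 2 ∂μ ≤
      ηg ^ 2 * ∑ s ∈ Finset.range t, (1 - δ) ^ (t - s) * ∫ ω, ‖Δ s ω‖ ^ 2 ∂μ :=
  hidden_state_bound_unbiased_general μ d δ hδ ηg x xh Δ hxL2 hxhL2 hΔL2 h0 hstep hcomp horth
end

section
/- Let L > 0, let P ≥ 1 and K ≥ 1 be natural numbers, let δ_c, δ_s ∈ (0, 1], and let η_g be a real number with 0 < η_g ≤ 1/L. Let η_ℓ^{(0)}, …, η_ℓ^{(P−1)} be nonnegative reals satisfying η_ℓ^{(p)} ≤ min( K / (2P(K + 1 − δ_c)), δ_s² / (12P) ) for every p, and set α_P := ∑_{p=0}^{P−1} η_ℓ^{(p)}. Then for every p with 0 ≤ p ≤ P − 1: ( 12 L² η_g² α_P / δ_s² + L η_g ) · ( 1 + (1 − δ_c)/K ) · P · η_ℓ^{(p)} ≤ 1. -/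
/-! With `a := L ηg ∈ [0, 1]` and `α_P ≤ δs² / 12` (summing the second bound over `p`), the
drift factor is at most `a² + a ≤ 2`. The first bound gives `P ηℓ ≤ K / (2 (K + 1 - δc))`,
and `1 + (1 - δc) / K = (K + 1 - δc) / K`, so the remaining factor is at most `1 / 2`. -/

lemma mul_sq_div_add_le_two {L ηg α δ : ℝ} (hδ : δ ≠ 0) (hα : α ≤ δ ^ 2 / 12)
    (hLη0 : 0 ≤ L * ηg) (hLη1 : L * ηg ≤ 1) :
    12 * L ^ 2 * ηg ^ 2 * α / δ ^ 2 + L * ηg ≤ 2 := by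
  have hdrift : 12 * L ^ 2 * ηg ^ 2 * α / δ ^ 2 ≤ (L * ηg) ^ 2 := by
    rw [div_le_iff₀ (by positivity)]
    calc 12 * L ^ 2 * ηg ^ 2 * α = (L * ηg) ^ 2 * (12 * α) := by ring
      _ ≤ (L * ηg) ^ 2 * δ ^ 2 := by gcongr; linarith
  have hsq : (L * ηg) ^ 2 ≤ 1 := pow_le_one₀ hLη0 hLη1
  linarith

lemma one_add_sub_div_mul_mul_mem_Icc {K P δ η : ℝ} (hK : 0 < K) (hP : 0 < P) (hδ : δ ≤ 1)
    (hη0 : 0 ≤ η) (hη : η ≤ K / (2 * P * (K + 1 - δ))) :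
    (1 + (1 - δ) / K) * P * η ∈ Set.Icc 0 (1 / 2) := by
  have hd : 0 < K + 1 - δ := by linarith
  rw [show 1 + (1 - δ) / K = (K + 1 - δ) / K by field_simp; ring]
  constructor
  · positivity
  · calc (K + 1 - δ) / K * P * η ≤ (K + 1 - δ) / K * P * (K / (2 * P * (K + 1 - δ))) := by
          gcongr
      _ = 1 / 2 := by field_simp

theorem condition_learning_rates_biased_general
    (L : ℝ) (hL : 0 < L) (P K : ℕ) (hK : 1 ≤ K)
    (δc δs : ℝ) (hδc : δc ∈ Set.Ioc (0 : ℝ) 1) (hδs : δs ∈ Set.Ioc (0 : ℝ) 1)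
    (ηg : ℝ) (hηg : 0 < ηg) (hηgL : ηg ≤ 1 / L)
    (ηl : Fin P → ℝ) (hηl0 : ∀ p, 0 ≤ ηl p)
    (hηl : ∀ p, ηl p ≤ min ((K : ℝ) / (2 * (P : ℝ) * ((K : ℝ) + 1 - δc)))
      (δs ^ 2 / (12 * (P : ℝ)))) :
    ∀ p : Fin P,
      (12 * L ^ 2 * ηg ^ 2 * (∑ q, ηl q) / δs ^ 2 + L * ηg) *
        (1 + (1 - δc) / (K : ℝ)) * (P : ℝ) * ηl p ≤ 1 := by
  intro p
  have hP : (0 : ℝ) < P := by exact_mod_cast p.pos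
  have hsum : ∑ q, ηl q ≤ δs ^ 2 / 12 :=
    calc ∑ q, ηl q ≤ P * (δs ^ 2 / (12 * P)) := by
          simpa using Finset.sum_le_card_nsmul Finset.univ ηl _
            fun q _ => (hηl q).trans (min_le_right _ _)
      _ = δs ^ 2 / 12 := by field_simp
  have hdrift := mul_sq_div_add_le_two hδs.1.ne' hsum (mul_pos hL hηg).le
    ((le_div_iff₀' hL).1 hηgL)
  have hclient := one_add_sub_div_mul_mul_mem_Icc (by exact_mod_cast hK) hP hδc.2 (hηl0 p)
    ((hηl p).trans (min_le_left _ _))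
  calc _ = (12 * L ^ 2 * ηg ^ 2 * (∑ q, ηl q) / δs ^ 2 + L * ηg) *
        ((1 + (1 - δc) / (K : ℝ)) * (P : ℝ) * ηl p) := by ring
    _ ≤ 2 * (1 / 2) := mul_le_mul hdrift hclient.2 hclient.1 zero_le_two
    _ = 1 := by norm_num

/-- The simple learning-rate bounds suffice for Condition (15) of the paper
(possibly biased server quantizer). -/
theorem condition_learning_rates_biased
    (L : ℝ) (hL : 0 < L) (P K : ℕ) (hP : 1 ≤ P) (hK : 1 ≤ K)
    (δc δs : ℝ) (hδc : δc ∈ Set.Ioc (0 : ℝ) 1) (hδs : δs ∈ Set.Ioc (0 : ℝ) 1)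
    (ηg : ℝ) (hηg : 0 < ηg) (hηgL : ηg ≤ 1 / L)
    (ηl : Fin P → ℝ) (hηl0 : ∀ p, 0 ≤ ηl p)
    (hηl : ∀ p, ηl p ≤ min ((K : ℝ) / (2 * (P : ℝ) * ((K : ℝ) + 1 - δc)))
      (δs ^ 2 / (12 * (P : ℝ)))) :
    ∀ p : Fin P,
      (12 * L ^ 2 * ηg ^ 2 * (∑ q, ηl q) / δs ^ 2 + L * ηg) *
        (1 + (1 - δc) / (K : ℝ)) * (P : ℝ) * ηl p ≤ 1 :=
  condition_learning_rates_biased_general L hL P K hK δc δs hδc hδs ηg hηg hηgL ηl hηl0 hηl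
end
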